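/- Let Γ be a group and {H_α} a collection of subgroups adapted to a pair of families (F, F̃) of subgroups of Γ. Then any subgroup G ∈ F̃ \ F can be conjugated into at most one subgroup of the subcollection {Λ_α} consisting of one representative per conjugacy class: if k₁⁻¹ G k₁ ≤ Λ_α and k₂⁻¹ G k₂ ≤ Λ_β with Λ_α, Λ_β representatives of distinct conjugacy classes, then a contradiction follows, i.e. α = β. -/
import Mathlib


/-- The conjugate subgroup `g A g⁻¹`. -/
def conjSub {Γ : Type*} [Group Γ] (g : Γ) (A : Subgroup Γ) : Subgroup Γ :=
  A.map (MulAut.conj g).toMonoidHom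

lemma conjSub_conjSub {Γ : Type*} [Group Γ] (g h : Γ) (A : Subgroup Γ) :
    conjSub g (conjSub h A) = conjSub (g * h) A := by
  unfold conjSub
  rw [Subgroup.map_map]
  congr 1
  ext x
  simp [mul_assoc]

lemma conjSub_mono {Γ : Type*} [Group Γ] (g : Γ) {A B : Subgroup Γ} (h : A ≤ B) :
    conjSub g A ≤ conjSub g B := Subgroup.map_mono h

lemma conjSub_one {Γ : Type*} [Group Γ] (A : Subgroup Γ) : conjSub 1 A = A := by
  unfold conjSub
  ext x; simp

/-- let `ℋ` be a collection of subgroups adapted to a pair of families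
`(F, F̃)` (here we use the separability condition (1) and conjugacy closure (2), with `F`
closed under passing to subgroups).  Then a subgroup `G ∈ F̃ \ F` can be conjugated into
members of at most one conjugacy class of `ℋ`: if `k₁⁻¹ G k₁ ≤ Λ_α` and `k₂⁻¹ G k₂ ≤ Λ_β`
then `Λ_α` and `Λ_β` are conjugate. -/
theorem conjugate_into_at_most_one_class {Γ : Type*} [Group Γ]
    (F Ftil ℋ : Set (Subgroup Γ))
    (hFsub : ∀ A ∈ F, ∀ B : Subgroup Γ, B ≤ A → B ∈ F)
    (hsep : ∀ A ∈ ℋ, ∀ B ∈ ℋ, A = B ∨ A ⊓ B ∈ F)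
    (hconj : ∀ A ∈ ℋ, ∀ g : Γ, conjSub g A ∈ ℋ)
    (G : Subgroup Γ) (hG : G ∈ Ftil) (hGnF : G ∉ F)
    (Λα Λβ : Subgroup Γ) (hΛα : Λα ∈ ℋ) (hΛβ : Λβ ∈ ℋ)
    (k₁ k₂ : Γ) (h1 : conjSub k₁⁻¹ G ≤ Λα) (h2 : conjSub k₂⁻¹ G ≤ Λβ) :
    ∃ g : Γ, conjSub g Λα = Λβ := by
  have hA : G ≤ conjSub k₁ Λα := by
    have := conjSub_mono k₁ h1
    rwa [conjSub_conjSub, mul_inv_cancel, conjSub_one] at this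
  have hB : G ≤ conjSub k₂ Λβ := by
    have := conjSub_mono k₂ h2
    rwa [conjSub_conjSub, mul_inv_cancel, conjSub_one] at this
  have hAH := hconj Λα hΛα k₁
  have hBH := hconj Λβ hΛβ k₂
  rcases hsep _ hAH _ hBH with heq | hF
  · refine ⟨k₂⁻¹ * k₁, ?_⟩
    have := congrArg (conjSub k₂⁻¹) heq
    rwa [conjSub_conjSub, conjSub_conjSub, inv_mul_cancel, conjSub_one] at this
  · exact absurd (hFsub _ hF G (le_inf hA hB)) hGnF
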